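/- Let σ₀ be the substitution fixing each p ∈ P, mapping each p' ∈ P' to ⟨π₁(p')^{∩id}⟩T, and mapping each a' ∈ A' to π₂(a')^{∩i̅d} (with P', A' disjoint copies of A and bijections π₁ : P' → A, π₂ : A' → A). For every PDL⁻ formula φ over term variables A' and formula variables P ⊔ P': if φ is derivable in the Hilbert system H⁻ for PDL⁻, then the PDL_REwLA+ formula σ₀(φ) is derivable in the Hilbert system H for PDL_REwLA+. -/

import Mathlib

/-! Statement 8: if a PDL⁻ formula `φ` is derivable in `H⁻`, then `σ₀(φ)` is
derivable in the Hilbert system `H` for PDL_REwLA+. -/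

/-- A generalized structure over term variables `A` and formula variables `P`,
with universe `W`. -/
structure GStruct (A P W : Type) where
  U : W → W → Prop
  rel : A → W → W → Prop
  rel_sub : ∀ a x y, rel a x y → U x y
  val : P → W → Prop

/-- The universal relation is a finite linear order (on a nonempty finite universe). -/
def FinLin {A P W : Type} (S : GStruct A P W) : Prop :=
  Nonempty W ∧ Finite W ∧ (∀ x, S.U x x) ∧
    (∀ x y z, S.U x y → S.U y z → S.U x z) ∧
    (∀ x y, S.U x y → S.U y x → x = y) ∧ (∀ x y, S.U x y ∨ S.U y x)

/-- The universal relation is a finite strict linear order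
(on a nonempty finite universe). -/
def SFinLin {A P W : Type} (S : GStruct A P W) : Prop :=
  Nonempty W ∧ Finite W ∧ (∀ x, ¬ S.U x x) ∧
    (∀ x y z, S.U x y → S.U y z → S.U x z) ∧
    (∀ x y, x ≠ y → S.U x y ∨ S.U y x)
mutual
  /-- Formulas of PDL for REwLA+. -/
  inductive Fml (A P : Type) : Type where
    | pv : P → Fml A P
    | imp : Fml A P → Fml A P → Fml A P
    | fls : Fml A P
    | box : Trm A P → Fml A P → Fml A P
  /-- Terms of PDL for REwLA+. -/
  inductive Trm (A P : Type) : Type where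
    | tv : A → Trm A P
    | comp : Trm A P → Trm A P → Trm A P
    | union : Trm A P → Trm A P → Trm A P
    | plus : Trm A P → Trm A P
    | adom : Trm A P → Trm A P
    | capId : Trm A P → Trm A P
    | capNid : Trm A P → Trm A P
    | test : Fml A P → Trm A P
end

namespace Fml
/-- ¬φ := φ → F -/
def neg {A P : Type} (φ : Fml A P) : Fml A P := .imp φ .fls
/-- T := ¬F -/
def tru {A P : Type} : Fml A P := neg .fls
/-- φ ∨ ψ := ¬φ → ψ -/
def or {A P : Type} (φ ψ : Fml A P) : Fml A P := .imp (neg φ) ψ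
/-- φ ∧ ψ := ¬(¬φ ∨ ¬ψ) -/
def and {A P : Type} (φ ψ : Fml A P) : Fml A P := neg (or (neg φ) (neg ψ))
/-- φ ↔ ψ := (φ → ψ) ∧ (ψ → φ) -/
def iff {A P : Type} (φ ψ : Fml A P) : Fml A P := and (.imp φ ψ) (.imp ψ φ)
/-- ⟨e⟩φ := ¬[e]¬φ -/
def dia {A P : Type} (e : Trm A P) (φ : Fml A P) : Fml A P := neg (.box e (neg φ))
end Fml

mutual
  /-- Semantics of PDL_REwLA+ formulas on a generalized structure. -/
  def semF {A P W : Type} (S : GStruct A P W) : Fml A P → W → Prop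
    | .pv p, x => S.val p x
    | .imp φ ψ, x => semF S φ x → semF S ψ x
    | .fls, _ => False
    | .box e φ, x => ∀ y, semT S e x y → semF S φ y
  /-- Semantics of PDL_REwLA+ terms on a generalized structure. -/
  def semT {A P W : Type} (S : GStruct A P W) : Trm A P → W → W → Prop
    | .tv a, x, y => S.rel a x y
    | .comp e f, x, z => ∃ y, semT S e x y ∧ semT S f y z
    | .union e f, x, y => semT S e x y ∨ semT S f x y
    | .plus e, x, y => Relation.TransGen (fun u v => semT S e u v) x y
    | .adom e, x, y => x = y ∧ ∀ z, ¬ semT S e x z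
    | .capId e, x, y => semT S e x y ∧ x = y
    | .capNid e, x, y => semT S e x y ∧ x ≠ y
    | .test φ, x, y => x = y ∧ semF S φ x
end
mutual
  /-- Formulas of (pure) PDL with tests. -/
  inductive PFml (VA VP : Type) : Type where
    | pv : VP → PFml VA VP
    | imp : PFml VA VP → PFml VA VP → PFml VA VP
    | fls : PFml VA VP
    | box : PTrm VA VP → PFml VA VP → PFml VA VP
  /-- Terms of (pure) PDL with tests. -/
  inductive PTrm (VA VP : Type) : Type where
    | tv : VA → PTrm VA VP
    | comp : PTrm VA VP → PTrm VA VP → PTrm VA VP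
    | union : PTrm VA VP → PTrm VA VP → PTrm VA VP
    | plus : PTrm VA VP → PTrm VA VP
    | test : PFml VA VP → PTrm VA VP
end

mutual
  /-- Semantics of PDL formulas on a generalized structure. -/
  def psemF {VA VP W : Type} (S : GStruct VA VP W) : PFml VA VP → W → Prop
    | .pv p, x => S.val p x
    | .imp φ ψ, x => psemF S φ x → psemF S ψ x
    | .fls, _ => False
    | .box e φ, x => ∀ y, psemT S e x y → psemF S φ y
  /-- Semantics of PDL terms on a generalized structure. -/
  def psemT {VA VP W : Type} (S : GStruct VA VP W) : PTrm VA VP → W → W → Prop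
    | .tv a, x, y => S.rel a x y
    | .comp e f, x, z => ∃ y, psemT S e x y ∧ psemT S f y z
    | .union e f, x, y => psemT S e x y ∨ psemT S f x y
    | .plus e, x, y => Relation.TransGen (fun u v => psemT S e u v) x y
    | .test φ, x, y => x = y ∧ psemF S φ x
end

/-- Validity of a PDL formula on all structures (those with `U = W × W`). -/
def PValidREL {VA VP : Type} (φ : PFml VA VP) : Prop :=
  ∀ (W : Type) (S : GStruct VA VP W), Nonempty W → (∀ x y, S.U x y) →
    ∀ x, psemF S φ x

mutual
  /-- Substitution instance of a PDL formula, substituting PDL_REwLA+ terms for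
  term variables and PDL_REwLA+ formulas for formula variables. -/
  def instF {VA VP A P : Type} (σt : VA → Trm A P) (σf : VP → Fml A P) :
      PFml VA VP → Fml A P
    | .pv p => σf p
    | .imp φ ψ => .imp (instF σt σf φ) (instF σt σf ψ)
    | .fls => .fls
    | .box e φ => .box (instT σt σf e) (instF σt σf φ)
  /-- Substitution instance of a PDL term. -/
  def instT {VA VP A P : Type} (σt : VA → Trm A P) (σf : VP → Fml A P) :
      PTrm VA VP → Trm A P
    | .tv a => σt a
    | .comp e f => .comp (instT σt σf e) (instT σt σf f)
    | .union e f => .union (instT σt σf e) (instT σt σf f)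
    | .plus e => .plus (instT σt σf e)
    | .test φ => .test (instF σt σf φ)
end
/-- The Hilbert system `H` for PDL_REwLA+ on finite linear orders. -/
inductive HProof {A P : Type} : Fml A P → Prop where
  /-- modus ponens -/
  | mp {φ ψ : Fml A P} : HProof φ → HProof (.imp φ ψ) → HProof ψ
  /-- necessitation -/
  | nec {φ : Fml A P} (e : Trm A P) : HProof φ → HProof (.box e φ)
  /-- (PDL): all substitution-instances of PDL formulas valid on REL -/
  | pdl {VA VP : Type} (φ : PFml VA VP) (hval : PValidREL φ)
      (σt : VA → Trm A P) (σf : VP → Fml A P) : HProof (instF σt σf φ)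
  /-- (a): [eᵃ]φ ↔ [([e]F)?]φ -/
  | adomAx (e : Trm A P) (φ : Fml A P) :
      HProof (Fml.iff (.box (.adom e) φ) (.box (.test (.box e .fls)) φ))
  /-- (∩id-T) -/
  | capIdT (e : Trm A P) (φ : Fml A P) :
      HProof (Fml.iff (.box (.capId e) φ) (.box (.test (Fml.dia (.capId e) Fml.tru)) φ))
  /-- (∩id-;) -/
  | capIdComp (e f : Trm A P) (φ : Fml A P) :
      HProof (Fml.iff (.box (.capId (.comp e f)) φ) (.box (.comp (.capId e) (.capId f)) φ))
  /-- (∩id-+) -/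
  | capIdUnion (e f : Trm A P) (φ : Fml A P) :
      HProof (Fml.iff (.box (.capId (.union e f)) φ) (.box (.union (.capId e) (.capId f)) φ))
  /-- (∩id-⁺) -/
  | capIdPlus (e : Trm A P) (φ : Fml A P) :
      HProof (Fml.iff (.box (.capId (.plus e)) φ) (.box (.capId e) φ))
  /-- (∩id-a) -/
  | capIdAdom (e : Trm A P) (φ : Fml A P) :
      HProof (Fml.iff (.box (.capId (.adom e)) φ) (.box (.adom e) φ))
  /-- (∩id-∩id) -/
  | capIdCapId (e : Trm A P) (φ : Fml A P) :
      HProof (Fml.iff (.box (.capId (.capId e)) φ) (.box (.capId e) φ))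
  /-- (∩id-∩i̅d) -/
  | capIdCapNid (e : Trm A P) (φ : Fml A P) :
      HProof (Fml.iff (.box (.capId (.capNid e)) φ) Fml.tru)
  /-- (∩id-?) -/
  | capIdTest (ψ : Fml A P) (φ : Fml A P) :
      HProof (Fml.iff (.box (.capId (.test ψ)) φ) (.box (.test ψ) φ))
  /-- (∩id-+-∩i̅d): [e]φ ↔ [e^{∩id} + e^{∩i̅d}]φ -/
  | split (e : Trm A P) (φ : Fml A P) :
      HProof (Fml.iff (.box e φ) (.box (.union (.capId e) (.capNid e)) φ))
  /-- (∩i̅d-;) -/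
  | capNidComp (e f : Trm A P) (φ : Fml A P) :
      HProof (Fml.iff (.box (.capNid (.comp e f)) φ)
        (.box (.union (.union (.comp (.capNid e) (.capId f)) (.comp (.capId e) (.capNid f)))
          (.comp (.capNid e) (.capNid f))) φ))
  /-- (∩i̅d-+) -/
  | capNidUnion (e f : Trm A P) (φ : Fml A P) :
      HProof (Fml.iff (.box (.capNid (.union e f)) φ) (.box (.union (.capNid e) (.capNid f)) φ))
  /-- (∩i̅d-⁺) -/
  | capNidPlus (e : Trm A P) (φ : Fml A P) :
      HProof (Fml.iff (.box (.capNid (.plus e)) φ) (.box (.plus (.capNid e)) φ))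
  /-- (∩i̅d-a) -/
  | capNidAdom (e : Trm A P) (φ : Fml A P) :
      HProof (Fml.iff (.box (.capNid (.adom e)) φ) Fml.tru)
  /-- (∩i̅d-∩id) -/
  | capNidCapId (e : Trm A P) (φ : Fml A P) :
      HProof (Fml.iff (.box (.capNid (.capId e)) φ) Fml.tru)
  /-- (∩i̅d-∩i̅d) -/
  | capNidCapNid (e : Trm A P) (φ : Fml A P) :
      HProof (Fml.iff (.box (.capNid (.capNid e)) φ) (.box (.capNid e) φ))
  /-- (∩i̅d-?) -/
  | capNidTest (ψ : Fml A P) (φ : Fml A P) :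
      HProof (Fml.iff (.box (.capNid (.test ψ)) φ) Fml.tru)
  /-- (Löb-∩i̅d⁺) -/
  | loeb (e : Trm A P) (φ : Fml A P) :
      HProof (.imp (.box (.plus (.capNid e)) (.imp (.box (.plus (.capNid e)) φ) φ))
        (.box (.plus (.capNid e)) φ))
mutual
  /-- Formulas of identity-free PDL (PDL⁻). -/
  inductive MFml (A P : Type) : Type where
    | pv : P → MFml A P
    | imp : MFml A P → MFml A P → MFml A P
    | fls : MFml A P
    | box : MTrm A P → MFml A P → MFml A P
  /-- Terms of identity-free PDL (PDL⁻). -/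
  inductive MTrm (A P : Type) : Type where
    | tv : A → MTrm A P
    | comp : MTrm A P → MTrm A P → MTrm A P
    | union : MTrm A P → MTrm A P → MTrm A P
    | plus : MTrm A P → MTrm A P
    | testL : MFml A P → MTrm A P → MTrm A P
    | testR : MTrm A P → MFml A P → MTrm A P
end

namespace MFml
/-- ¬φ := φ → F -/
def neg {A P : Type} (φ : MFml A P) : MFml A P := .imp φ .fls
/-- T := ¬F -/
def tru {A P : Type} : MFml A P := neg .fls
/-- φ ∨ ψ := ¬φ → ψ -/
def or {A P : Type} (φ ψ : MFml A P) : MFml A P := .imp (neg φ) ψ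
/-- φ ∧ ψ := ¬(¬φ ∨ ¬ψ) -/
def and {A P : Type} (φ ψ : MFml A P) : MFml A P := neg (or (neg φ) (neg ψ))
/-- φ ↔ ψ := (φ → ψ) ∧ (ψ → φ) -/
def iff {A P : Type} (φ ψ : MFml A P) : MFml A P := and (.imp φ ψ) (.imp ψ φ)
/-- ⟨e⟩φ := ¬[e]¬φ -/
def dia {A P : Type} (e : MTrm A P) (φ : MFml A P) : MFml A P := neg (.box e (neg φ))
end MFml

mutual
  /-- Semantics of PDL⁻ formulas on a generalized structure. -/
  def msemF {A P W : Type} (S : GStruct A P W) : MFml A P → W → Prop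
    | .pv p, x => S.val p x
    | .imp φ ψ, x => msemF S φ x → msemF S ψ x
    | .fls, _ => False
    | .box e φ, x => ∀ y, msemT S e x y → msemF S φ y
  /-- Semantics of PDL⁻ terms on a generalized structure. -/
  def msemT {A P W : Type} (S : GStruct A P W) : MTrm A P → W → W → Prop
    | .tv a, x, y => S.rel a x y
    | .comp e f, x, z => ∃ y, msemT S e x y ∧ msemT S f y z
    | .union e f, x, y => msemT S e x y ∨ msemT S f x y
    | .plus e, x, y => Relation.TransGen (fun u v => msemT S e u v) x y
    | .testL ψ e, x, y => msemF S ψ x ∧ msemT S e x y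
    | .testR e ψ, x, y => msemT S e x y ∧ msemF S ψ y
end
/-- Propositional formulas over variables `V`. -/
inductive PropF (V : Type) : Type where
  | pv : V → PropF V
  | imp : PropF V → PropF V → PropF V
  | fls : PropF V

/-- Evaluation of a propositional formula under a valuation. -/
def PropF.eval {V : Type} (v : V → Prop) : PropF V → Prop
  | .pv p => v p
  | .imp a b => PropF.eval v a → PropF.eval v b
  | .fls => False

/-- Substitution instance of a propositional formula, substituting PDL⁻ formulas
for the propositional variables. -/
def PropF.inst {V A P : Type} (σ : V → MFml A P) : PropF V → MFml A P
  | .pv p => σ p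
  | .imp a b => .imp (PropF.inst σ a) (PropF.inst σ b)
  | .fls => .fls

/-- The Hilbert system `H⁻` for PDL⁻ on finite strict linear orders. -/
inductive MProof {A P : Type} : MFml A P → Prop where
  /-- modus ponens -/
  | mp {φ ψ : MFml A P} : MProof φ → MProof (.imp φ ψ) → MProof ψ
  /-- necessitation -/
  | nec {φ : MFml A P} (e : MTrm A P) : MProof φ → MProof (.box e φ)
  /-- (Prop): all substitution-instances of valid propositional formulas -/
  | prop {V : Type} (χ : PropF V) (hval : ∀ v, PropF.eval v χ) (σ : V → MFml A P) :
      MProof (PropF.inst σ χ)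
  /-- (;) -/
  | compAx (e f : MTrm A P) (φ : MFml A P) :
      MProof (MFml.iff (.box (.comp e f) φ) (.box e (.box f φ)))
  /-- (+) -/
  | unionAx (e f : MTrm A P) (φ : MFml A P) :
      MProof (MFml.iff (.box (.union e f) φ) (MFml.and (.box e φ) (.box f φ)))
  /-- (⁺) -/
  | plusAx (e : MTrm A P) (φ : MFml A P) :
      MProof (MFml.iff (.box (.plus e) φ) (MFml.and (.box e φ) (.box e (.box (.plus e) φ))))
  /-- (⁺-Ind) -/
  | plusInd (e : MTrm A P) (φ : MFml A P) :
      MProof (.imp (MFml.and (.box e φ) (.box (.plus e) (.imp φ (.box e φ)))) (.box (.plus e) φ))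
  /-- (?-L) -/
  | testLAx (ψ : MFml A P) (e : MTrm A P) (φ : MFml A P) :
      MProof (MFml.iff (.box (.testL ψ e) φ) (.imp ψ (.box e φ)))
  /-- (?-R) -/
  | testRAx (e : MTrm A P) (ψ φ : MFml A P) :
      MProof (MFml.iff (.box (.testR e ψ) φ) (.box e (.imp ψ φ)))
  /-- (K) -/
  | kAx (e : MTrm A P) (φ ψ : MFml A P) :
      MProof (.imp (.box e (.imp φ ψ)) (.imp (.box e φ) (.box e ψ)))
  /-- (Löb-⁺) -/
  | loeb (e : MTrm A P) (φ : MFml A P) :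
      MProof (.imp (.box (.plus e) (.imp (.box (.plus e) φ) φ)) (.box (.plus e) φ))
mutual
  /-- The substitution `σ₀` applied to a PDL⁻ formula over term variables `A'` and
  formula variables `P ⊕ P'`: each `p ∈ P` is fixed, each `p' ∈ P'` becomes
  `⟨π₁(p')^{∩id}⟩T`, and each `a' ∈ A'` becomes `π₂(a')^{∩i̅d}`. -/
  def sigF {A P A' P' : Type} (π₁ : P' ≃ A) (π₂ : A' ≃ A) :
      MFml A' (P ⊕ P') → Fml A P
    | .pv (Sum.inl p) => .pv p
    | .pv (Sum.inr p') => Fml.dia (.capId (.tv (π₁ p'))) Fml.tru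
    | .imp φ ψ => .imp (sigF π₁ π₂ φ) (sigF π₁ π₂ ψ)
    | .fls => .fls
    | .box e φ => .box (sigT π₁ π₂ e) (sigF π₁ π₂ φ)
  /-- The substitution `σ₀` applied to a PDL⁻ term. -/
  def sigT {A P A' P' : Type} (π₁ : P' ≃ A) (π₂ : A' ≃ A) :
      MTrm A' (P ⊕ P') → Trm A P
    | .tv a' => .capNid (.tv (π₂ a'))
    | .comp e f => .comp (sigT π₁ π₂ e) (sigT π₁ π₂ f)
    | .union e f => .union (sigT π₁ π₂ e) (sigT π₁ π₂ f)
    | .plus e => .plus (sigT π₁ π₂ e)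
    | .testL ψ e => .comp (.test (sigF π₁ π₂ ψ)) (sigT π₁ π₂ e)
    | .testR e ψ => .comp (sigT π₁ π₂ e) (.test (sigF π₁ π₂ ψ))
end

/-! Every axiom of `H⁻` except Löb-⁺ is valid on all structures; reading its identity-free
terms as PDL terms, its `σ₀`-image is a substitution instance of a valid PDL formula, hence an
instance of (PDL). For Löb-⁺, the `∩id`-part of every `σ₀`-image term `G` is provably empty,
because the letters are sent to `∩i̅d`-terms and tests only occur composed with them. Splitting
`G⁺` into its `∩id` and `∩i̅d` parts then gives `[G⁺]χ ↔ [(G^{∩i̅d})⁺]χ`, which turns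
Löb-∩i̅d⁺ into Löb-⁺ for `G`. -/

namespace PFml

def neg {VA VP : Type} (φ : PFml VA VP) : PFml VA VP := .imp φ .fls

def or {VA VP : Type} (φ ψ : PFml VA VP) : PFml VA VP := .imp (neg φ) ψ

def and {VA VP : Type} (φ ψ : PFml VA VP) : PFml VA VP := neg (or (neg φ) (neg ψ))

def iff {VA VP : Type} (φ ψ : PFml VA VP) : PFml VA VP := and (.imp φ ψ) (.imp ψ φ)

theorem psemF_iff {VA VP W : Type} (S : GStruct VA VP W) (φ ψ : PFml VA VP) (x : W) :
    psemF S (iff φ ψ) x ↔ (psemF S φ x ↔ psemF S ψ x) := by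
  simp only [iff, and, or, neg, psemF]
  tauto

end PFml

namespace HProof

variable {A P : Type}

/-- Taking the terms and formulas of `H` themselves as the atoms, `instF id id χ` is `χ` read
as a formula of `H`. -/
theorem of_valid (χ : PFml (Trm A P) (Fml A P))
    (h : ∀ (W : Type) (S : GStruct (Trm A P) (Fml A P) W) (x : W), psemF S χ x) :
    HProof (instF id id χ) :=
  pdl χ (fun W S _ _ x => h W S x) id id

theorem tru : HProof (Fml.tru : Fml A P) :=
  of_valid (.imp .fls .fls) fun _ _ _ => id

theorem iff_mp {a b : Fml A P} (h : HProof (Fml.iff a b)) : HProof (.imp a b) :=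
  h.mp <| of_valid (.imp (PFml.iff (.pv a) (.pv b)) (.imp (.pv a) (.pv b))) fun W S x => by
    simp only [psemF, PFml.psemF_iff]
    tauto

theorem iff_mpr {a b : Fml A P} (h : HProof (Fml.iff a b)) : HProof (.imp b a) :=
  h.mp <| of_valid (.imp (PFml.iff (.pv a) (.pv b)) (.imp (.pv b) (.pv a))) fun W S x => by
    simp only [psemF, PFml.psemF_iff]
    tauto

theorem iff_intro {a b : Fml A P} (hab : HProof (.imp a b)) (hba : HProof (.imp b a)) :
    HProof (Fml.iff a b) :=
  hba.mp <| hab.mp <| of_valid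
    (.imp (.imp (.pv a) (.pv b)) (.imp (.imp (.pv b) (.pv a)) (PFml.iff (.pv a) (.pv b))))
    fun W S x => by
      simp only [psemF, PFml.psemF_iff]
      tauto

theorem imp_trans {a b c : Fml A P} (hab : HProof (.imp a b)) (hbc : HProof (.imp b c)) :
    HProof (.imp a c) :=
  hbc.mp <| hab.mp <| of_valid
    (.imp (.imp (.pv a) (.pv b)) (.imp (.imp (.pv b) (.pv c)) (.imp (.pv a) (.pv c))))
    fun W S x => by
      simp only [psemF]
      tauto

theorem imp_imp_left {a b : Fml A P} (c : Fml A P) (h : HProof (.imp b a)) :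
    HProof (.imp (.imp a c) (.imp b c)) :=
  h.mp <| of_valid
    (.imp (.imp (.pv b) (.pv a)) (.imp (.imp (.pv a) (.pv c)) (.imp (.pv b) (.pv c))))
    fun W S x => by
      simp only [psemF]
      tauto

theorem box_mono {a b : Fml A P} (e : Trm A P) (h : HProof (.imp a b)) :
    HProof (.imp (.box e a) (.box e b)) :=
  (nec e h).mp <| of_valid
    (.imp (.box (.tv e) (.imp (.pv a) (.pv b)))
      (.imp (.box (.tv e) (.pv a)) (.box (.tv e) (.pv b))))
    fun W S x => by
      simp only [psemF]
      exact fun hab ha y hy => hab y hy (ha y hy)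

theorem box_comp (e f : Trm A P) (φ : Fml A P) :
    HProof (Fml.iff (.box (.comp e f) φ) (.box e (.box f φ))) :=
  of_valid (PFml.iff (.box (.comp (.tv e) (.tv f)) (.pv φ)) (.box (.tv e) (.box (.tv f) (.pv φ))))
    fun W S x => by
      simp only [PFml.psemF_iff, psemF, psemT]
      exact ⟨fun h y hy z hz => h z ⟨y, hy, hz⟩, fun h z ⟨y, hy, hz⟩ => h y hy z hz⟩

theorem box_union_intro (e f : Trm A P) (φ : Fml A P) :
    HProof (.imp (.box e φ) (.imp (.box f φ) (.box (.union e f) φ))) :=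
  of_valid (.imp (.box (.tv e) (.pv φ)) (.imp (.box (.tv f) (.pv φ))
      (.box (.union (.tv e) (.tv f)) (.pv φ))))
    fun W S x => by
      simp only [psemF, psemT]
      exact fun he hf y hy => hy.elim (he y) (hf y)

theorem box_union_elim_right (e f : Trm A P) (φ : Fml A P) :
    HProof (.imp (.box (.union e f) φ) (.box f φ)) :=
  of_valid (.imp (.box (.union (.tv e) (.tv f)) (.pv φ)) (.box (.tv f) (.pv φ)))
    fun W S x => by
      simp only [psemF, psemT]
      exact fun h y hy => h y (Or.inr hy)

theorem box_capId_comp {G H : Trm A P} {φ : Fml A P}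
    (h : HProof (.box (.capId G) (.box (.capId H) φ))) : HProof (.box (.capId (.comp G H)) φ) :=
  (h.mp (iff_mpr (box_comp _ _ φ))).mp (iff_mpr (capIdComp G H φ))

theorem box_plus_iff_box_plus_capNid {G : Trm A P} (hG : ∀ χ, HProof (.box (.capId G) χ))
    (χ : Fml A P) : HProof (Fml.iff (.box (.plus G) χ) (.box (.plus (.capNid G)) χ)) :=
  iff_intro
    (imp_trans (imp_trans (iff_mp (split (.plus G) χ)) (box_union_elim_right _ _ χ))
      (iff_mp (capNidPlus G χ)))
    (imp_trans
      (imp_trans (iff_mpr (capNidPlus G χ))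
        (((hG χ).mp (iff_mpr (capIdPlus G χ))).mp (box_union_intro _ _ χ)))
      (iff_mpr (split (.plus G) χ)))

theorem loeb_of_box_capId {G : Trm A P} (hG : ∀ χ, HProof (.box (.capId G) χ)) (φ : Fml A P) :
    HProof (.imp (.box (.plus G) (.imp (.box (.plus G) φ) φ)) (.box (.plus G) φ)) :=
  have hφ := box_plus_iff_box_plus_capNid hG φ
  imp_trans (iff_mp (box_plus_iff_box_plus_capNid hG _))
    (imp_trans (box_mono _ (imp_imp_left φ (iff_mpr hφ)))
      (imp_trans (loeb G φ) (iff_mpr hφ)))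

end HProof

def MValid {A P : Type} (φ : MFml A P) : Prop :=
  ∀ (W : Type) (S : GStruct A P W) (x : W), msemF S φ x

namespace MFml

variable {A P : Type}

theorem msemF_and {W : Type} (S : GStruct A P W) (φ ψ : MFml A P) (x : W) :
    msemF S (MFml.and φ ψ) x ↔ msemF S φ x ∧ msemF S ψ x := by
  simp only [MFml.and, MFml.or, MFml.neg, msemF]
  tauto

theorem msemF_iff {W : Type} (S : GStruct A P W) (φ ψ : MFml A P) (x : W) :
    msemF S (MFml.iff φ ψ) x ↔ (msemF S φ x ↔ msemF S ψ x) := by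
  simp only [MFml.iff, msemF_and, msemF]
  tauto

theorem msemF_propInst {V W : Type} (S : GStruct A P W) (σ : V → MFml A P) (x : W) :
    ∀ χ : PropF V, msemF S (PropF.inst σ χ) x ↔ PropF.eval (fun v => msemF S (σ v) x) χ
  | .pv _ => Iff.rfl
  | .imp a b => imp_congr (msemF_propInst S σ x a) (msemF_propInst S σ x b)
  | .fls => Iff.rfl

end MFml

namespace MValid

open MFml

variable {A P : Type}

theorem prop {V : Type} (χ : PropF V) (hval : ∀ v, PropF.eval v χ) (σ : V → MFml A P) :
    MValid (PropF.inst σ χ) :=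
  fun _ S x => (msemF_propInst S σ x χ).2 (hval _)

theorem compAx (e f : MTrm A P) (φ : MFml A P) :
    MValid (MFml.iff (.box (.comp e f) φ) (.box e (.box f φ))) := fun W S x => by
  simp only [msemF_iff, msemF, msemT]
  exact ⟨fun h y hy z hz => h z ⟨y, hy, hz⟩, fun h z ⟨y, hy, hz⟩ => h y hy z hz⟩

theorem unionAx (e f : MTrm A P) (φ : MFml A P) :
    MValid (MFml.iff (.box (.union e f) φ) (MFml.and (.box e φ) (.box f φ))) := fun W S x => by
  simp only [msemF_iff, msemF_and, msemF, msemT]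
  exact ⟨fun h => ⟨fun y hy => h y (.inl hy), fun y hy => h y (.inr hy)⟩,
    fun ⟨he, hf⟩ y hy => hy.elim (he y) (hf y)⟩

theorem plusAx (e : MTrm A P) (φ : MFml A P) :
    MValid (MFml.iff (.box (.plus e) φ) (MFml.and (.box e φ) (.box e (.box (.plus e) φ)))) :=
  fun W S x => by
    simp only [msemF_iff, msemF_and, msemF, msemT]
    refine ⟨fun h => ⟨fun y hy => h y (.single hy), fun y hy z hz => h z (.head hy hz)⟩,
      fun ⟨h₁, h₂⟩ y hy => ?_⟩
    obtain ⟨z, hxz, hzy⟩ := Relation.TransGen.head'_iff.1 hy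
    obtain rfl | hzy := Relation.reflTransGen_iff_eq_or_transGen.1 hzy
    exacts [h₁ y hxz, h₂ z hxz y hzy]

theorem plusInd (e : MTrm A P) (φ : MFml A P) :
    MValid (.imp (MFml.and (.box e φ) (.box (.plus e) (.imp φ (.box e φ)))) (.box (.plus e) φ)) :=
  fun W S x => by
    simp only [msemF_and, msemF, msemT]
    rintro ⟨hbase, hstep⟩ y hy
    induction hy with
    | single hxy => exact hbase _ hxy
    | tail hxz hzy ih => exact hstep _ hxz ih _ hzy

theorem testLAx (ψ : MFml A P) (e : MTrm A P) (φ : MFml A P) :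
    MValid (MFml.iff (.box (.testL ψ e) φ) (.imp ψ (.box e φ))) := fun W S x => by
  simp only [msemF_iff, msemF, msemT]
  exact ⟨fun h hψ y hy => h y ⟨hψ, hy⟩, fun h y ⟨hψ, hy⟩ => h hψ y hy⟩

theorem testRAx (e : MTrm A P) (ψ φ : MFml A P) :
    MValid (MFml.iff (.box (.testR e ψ) φ) (.box e (.imp ψ φ))) := fun W S x => by
  simp only [msemF_iff, msemF, msemT]
  exact ⟨fun h y hy hψ => h y ⟨hy, hψ⟩, fun h y ⟨hy, hψ⟩ => h y hy hψ⟩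

theorem kAx (e : MTrm A P) (φ ψ : MFml A P) :
    MValid (.imp (.box e (.imp φ ψ)) (.imp (.box e φ) (.box e ψ))) := fun W S x => by
  simp only [msemF]
  exact fun h hφ y hy => h y hy (hφ y hy)

end MValid

mutual

def MFml.toPFml {A P : Type} : MFml A P → PFml A P
  | .pv p => .pv p
  | .imp φ ψ => .imp φ.toPFml ψ.toPFml
  | .fls => .fls
  | .box e φ => .box e.toPTrm φ.toPFml

def MTrm.toPTrm {A P : Type} : MTrm A P → PTrm A P
  | .tv a => .tv a
  | .comp e f => .comp e.toPTrm f.toPTrm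
  | .union e f => .union e.toPTrm f.toPTrm
  | .plus e => .plus e.toPTrm
  | .testL ψ e => .comp (.test ψ.toPFml) e.toPTrm
  | .testR e ψ => .comp e.toPTrm (.test ψ.toPFml)

end

section Translation

variable {A P W : Type} (S : GStruct A P W)

mutual

theorem psemF_toPFml : ∀ (φ : MFml A P) (x : W), psemF S φ.toPFml x ↔ msemF S φ x
  | .pv _, _ => Iff.rfl
  | .imp φ ψ, x => imp_congr (psemF_toPFml φ x) (psemF_toPFml ψ x)
  | .fls, _ => Iff.rfl
  | .box e φ, x => forall_congr' fun y => imp_congr (psemT_toPTrm e x y) (psemF_toPFml φ y)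

theorem psemT_toPTrm : ∀ (e : MTrm A P) (x y : W), psemT S e.toPTrm x y ↔ msemT S e x y
  | .tv _, _, _ => Iff.rfl
  | .comp e f, x, z => exists_congr fun y => and_congr (psemT_toPTrm e x y) (psemT_toPTrm f y z)
  | .union e f, x, y => or_congr (psemT_toPTrm e x y) (psemT_toPTrm f x y)
  | .plus e, x, y => by
      simp only [MTrm.toPTrm, psemT, msemT, psemT_toPTrm e]
  | .testL ψ e, x, y => by
      simp only [MTrm.toPTrm, psemT, msemT, psemF_toPFml ψ, psemT_toPTrm e]
      exact ⟨fun ⟨_, ⟨rfl, hψ⟩, he⟩ => ⟨hψ, he⟩, fun ⟨hψ, he⟩ => ⟨x, ⟨rfl, hψ⟩, he⟩⟩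
  | .testR e ψ, x, y => by
      simp only [MTrm.toPTrm, psemT, msemT, psemF_toPFml ψ, psemT_toPTrm e]
      exact ⟨fun ⟨_, he, rfl, hψ⟩ => ⟨he, hψ⟩, fun ⟨he, hψ⟩ => ⟨y, he, rfl, hψ⟩⟩

end

end Translation

section Substitution

variable {A P A' P' : Type} (π₁ : P' ≃ A) (π₂ : A' ≃ A)

def sigTv (a' : A') : Trm A P := .capNid (.tv (π₂ a'))

def sigPv : P ⊕ P' → Fml A P := Sum.elim .pv fun p' => Fml.dia (.capId (.tv (π₁ p'))) Fml.tru

mutual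

theorem sigF_eq_instF_toPFml : ∀ φ : MFml A' (P ⊕ P'),
    sigF π₁ π₂ φ = instF (sigTv π₂) (sigPv π₁) φ.toPFml
  | .pv (.inl _) => rfl
  | .pv (.inr _) => rfl
  | .imp φ ψ => by
      simp only [sigF, MFml.toPFml, instF, sigF_eq_instF_toPFml φ, sigF_eq_instF_toPFml ψ]
  | .fls => rfl
  | .box e φ => by
      simp only [sigF, MFml.toPFml, instF, sigT_eq_instT_toPTrm e, sigF_eq_instF_toPFml φ]

theorem sigT_eq_instT_toPTrm : ∀ e : MTrm A' (P ⊕ P'),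
    sigT π₁ π₂ e = instT (sigTv π₂) (sigPv π₁) e.toPTrm
  | .tv _ => rfl
  | .comp e f => by
      simp only [sigT, MTrm.toPTrm, instT, sigT_eq_instT_toPTrm e, sigT_eq_instT_toPTrm f]
  | .union e f => by
      simp only [sigT, MTrm.toPTrm, instT, sigT_eq_instT_toPTrm e, sigT_eq_instT_toPTrm f]
  | .plus e => by simp only [sigT, MTrm.toPTrm, instT, sigT_eq_instT_toPTrm e]
  | .testL ψ e => by
      simp only [sigT, MTrm.toPTrm, instT, sigF_eq_instF_toPFml ψ, sigT_eq_instT_toPTrm e]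
  | .testR e ψ => by
      simp only [sigT, MTrm.toPTrm, instT, sigF_eq_instF_toPFml ψ, sigT_eq_instT_toPTrm e]

end

theorem HProof.box_capId_sigT :
    ∀ (e : MTrm A' (P ⊕ P')) (φ : Fml A P), HProof (.box (.capId (sigT π₁ π₂ e)) φ)
  | .tv _, φ => tru.mp (iff_mpr (capIdCapNid _ φ))
  | .comp _ f, φ => box_capId_comp (nec _ (box_capId_sigT f φ))
  | .union e f, φ =>
      ((box_capId_sigT f φ).mp ((box_capId_sigT e φ).mp (box_union_intro _ _ φ))).mp
        (iff_mpr (capIdUnion _ _ φ))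
  | .plus e, φ => (box_capId_sigT e φ).mp (iff_mpr (capIdPlus _ φ))
  | .testL _ e, φ => box_capId_comp (nec _ (box_capId_sigT e φ))
  | .testR e _, φ => box_capId_comp (box_capId_sigT e (.box _ φ))

theorem hproof_sig_of_mValid {φ : MFml A' (P ⊕ P')} (h : MValid φ) : HProof (sigF π₁ π₂ φ) := by
  rw [sigF_eq_instF_toPFml]
  exact HProof.pdl _ (fun W S _ _ x => (psemF_toPFml S φ x).2 (h W S x)) _ _

theorem hproof_sig_loeb (e : MTrm A' (P ⊕ P')) (φ : MFml A' (P ⊕ P')) :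
    HProof (sigF π₁ π₂ (.imp (.box (.plus e) (.imp (.box (.plus e) φ) φ)) (.box (.plus e) φ))) :=
  HProof.loeb_of_box_capId (HProof.box_capId_sigT π₁ π₂ e) (sigF π₁ π₂ φ)

end Substitution

theorem hproof_sig_of_mproof
    {A P A' P' : Type} (π₁ : P' ≃ A) (π₂ : A' ≃ A) (φ : MFml A' (P ⊕ P')) :
    MProof φ → HProof (sigF π₁ π₂ φ) := by
  intro h
  induction h with
  | mp _ _ ih₁ ih₂ => exact ih₁.mp ih₂
  | nec e _ ih => exact .nec (sigT π₁ π₂ e) ih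
  | prop χ hval σ => exact hproof_sig_of_mValid π₁ π₂ (.prop χ hval σ)
  | compAx e f φ => exact hproof_sig_of_mValid π₁ π₂ (.compAx e f φ)
  | unionAx e f φ => exact hproof_sig_of_mValid π₁ π₂ (.unionAx e f φ)
  | plusAx e φ => exact hproof_sig_of_mValid π₁ π₂ (.plusAx e φ)
  | plusInd e φ => exact hproof_sig_of_mValid π₁ π₂ (.plusInd e φ)
  | testLAx ψ e φ => exact hproof_sig_of_mValid π₁ π₂ (.testLAx ψ e φ)
  | testRAx e ψ φ => exact hproof_sig_of_mValid π₁ π₂ (.testRAx e ψ φ)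
  | kAx e φ ψ => exact hproof_sig_of_mValid π₁ π₂ (.kAx e φ ψ)
  | loeb e φ => exact hproof_sig_loeb π₁ π₂ e φ
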